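/- arXiv:2403.01940 — 5 statements merged into one kernel-verified Lean document; each statement's English description precedes it below -/
import Mathlib

section
/- Let n ≥ 0 be an integer and δ ∈ (0, n+1). The equation e^s = 1 + s/1! + ... + s^n/n! + s^{n+1}/(δ·n!) has exactly one solution s > 0, and this solution satisfies s > n + 1 - δ. -/
open Real Finset

/-- Degree-n Taylor polynomial of `exp` at 0. -/
noncomputable def T (n : ℕ) (s : ℝ) : ℝ := ∑ k ∈ Finset.range (n + 1), s ^ k / (Nat.factorial k)

noncomputable def G (n : ℕ) (s : ℝ) : ℝ := ∑' j : ℕ, s ^ j / (Nat.factorial (n + 1 + j))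

lemma Gsummable (n : ℕ) (s : ℝ) (hs : 0 ≤ s) :
    Summable (fun j : ℕ => s ^ j / (Nat.factorial (n + 1 + j))) := by
  refine Summable.of_nonneg_of_le (fun j => by positivity)
    (fun j => ?_) (Real.summable_pow_div_factorial s)
  gcongr
  omega

lemma exp_eq_T_add (n : ℕ) (s : ℝ) :
    Real.exp s = T n s + s ^ (n + 1) * G n s := by
  have hsum : Summable (fun k : ℕ => s ^ k / (Nat.factorial k)) :=
    Real.summable_pow_div_factorial s
  have hexp : Real.exp s = ∑' k : ℕ, s ^ k / (Nat.factorial k) := by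
    rw [Real.exp_eq_exp_ℝ, NormedSpace.exp_eq_tsum_div]
  have hsplit := Summable.sum_add_tsum_nat_add (f := fun k : ℕ => s ^ k / (Nat.factorial k)) (n + 1) hsum
  have htail : (∑' j : ℕ, s ^ (j + (n + 1)) / (Nat.factorial (j + (n + 1))))
      = s ^ (n + 1) * G n s := by
    rw [G, ← tsum_mul_left]
    congr 1
    funext j
    rw [pow_add, add_comm j (n + 1)]
    ring
  rw [hexp, ← hsplit, T, htail]

lemma Gmono (n : ℕ) {a b : ℝ} (ha : 0 ≤ a) (hab : a < b) : G n a < G n b := by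
  have hb : 0 ≤ b := ha.trans hab.le
  refine Summable.tsum_lt_tsum_of_nonneg (i := 1) (fun j => by positivity)
    (fun j => ?_) ?_ (Gsummable n b hb)
  · gcongr
  · have hfac : (0:ℝ) < (Nat.factorial (n + 1 + 1) : ℝ) := by positivity
    simp only [pow_one]
    exact (div_lt_div_iff_of_pos_right hfac).mpr hab

/-- Geometric upper bound for `G`. -/
lemma Gbound (n : ℕ) {s : ℝ} (hs : 0 ≤ s) (hs2 : s < (n : ℝ) + 2) :
    G n s ≤ ((n : ℝ) + 2) / ((Nat.factorial (n + 1)) * ((n : ℝ) + 2 - s)) := by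
  have hr0 : (0:ℝ) ≤ s / ((n : ℝ) + 2) := by positivity
  have hr1 : s / ((n : ℝ) + 2) < 1 := by
    rw [div_lt_one (by positivity)]; linarith
  have hgeo : Summable (fun j : ℕ => (s / ((n : ℝ) + 2)) ^ j) :=
    summable_geometric_of_lt_one hr0 hr1
  have hle : ∀ j : ℕ, s ^ j / (Nat.factorial (n + 1 + j))
      ≤ (1 / (Nat.factorial (n + 1))) * (s / ((n : ℝ) + 2)) ^ j := by
    intro j
    have hfac : ((Nat.factorial (n + 1)) : ℝ) * ((n : ℝ) + 2) ^ j
        ≤ (Nat.factorial (n + 1 + j)) := by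
      have := Nat.factorial_mul_pow_le_factorial (m := n + 1) (n := j)
      have h2 : ((n : ℝ) + 2) = ((n + 1 + 1 : ℕ) : ℝ) := by push_cast; ring
      rw [h2, ← Nat.cast_pow, ← Nat.cast_mul]
      exact_mod_cast this
    have hrw : (1 / ((Nat.factorial (n+1)):ℝ)) * (s / ((n:ℝ)+2)) ^ j
        = s ^ j / (((Nat.factorial (n+1)):ℝ) * ((n:ℝ)+2) ^ j) := by
      rw [div_pow]; field_simp
    rw [hrw]
    gcongr
    all_goals first
      | exact pow_nonneg hs j
      | exact hfac
      | positivity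
  calc G n s ≤ ∑' j : ℕ, (1 / (Nat.factorial (n + 1))) * (s / ((n : ℝ) + 2)) ^ j := by
        refine Summable.tsum_le_tsum hle (Gsummable n s hs) (hgeo.mul_left _)
    _ = (1 / (Nat.factorial (n + 1))) * (1 - s / ((n : ℝ) + 2))⁻¹ := by
        rw [tsum_mul_left, tsum_geometric_of_lt_one hr0 hr1]
    _ = ((n : ℝ) + 2) / ((Nat.factorial (n + 1)) * ((n : ℝ) + 2 - s)) := by
        have : 1 - s / ((n : ℝ) + 2) = ((n : ℝ) + 2 - s) / ((n : ℝ) + 2) := by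
          field_simp
        rw [this]
        have h1 : (0:ℝ) < (Nat.factorial (n + 1) : ℝ) := by positivity
        have h2 : (0:ℝ) < (n : ℝ) + 2 - s := by linarith
        field_simp

/-- Single-term lower bound for `G`. -/
lemma Gterm (n : ℕ) {s : ℝ} (hs : 0 ≤ s) : s / (Nat.factorial (n + 2)) ≤ G n s := by
  have := Summable.le_tsum (Gsummable n s hs) 1 (fun j _ => by positivity)
  simpa [G, show n + 1 + 1 = n + 2 from rfl] using this

theorem stmt4 (n : ℕ) (δ : ℝ) (hδ : δ ∈ Set.Ioo 0 ((n : ℝ) + 1)) :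
    (∃! s : ℝ, 0 < s ∧ Real.exp s = T n s + s ^ (n + 1) / (δ * Nat.factorial n)) ∧
    (∀ s : ℝ, 0 < s → Real.exp s = T n s + s ^ (n + 1) / (δ * Nat.factorial n) →
      (n : ℝ) + 1 - δ < s) := by
  obtain ⟨hδ0, hδ1⟩ := hδ
  have hfn : (0:ℝ) < (Nat.factorial n : ℝ) := by positivity
  have hc : (0:ℝ) < 1 / (δ * Nat.factorial n) := by positivity
  -- equation ↔ G n s = 1/(δ n!)
  have key : ∀ s : ℝ, 0 < s →
      (Real.exp s = T n s + s ^ (n + 1) / (δ * Nat.factorial n) ↔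
        G n s = 1 / (δ * Nat.factorial n)) := by
    intro s hs
    rw [exp_eq_T_add n s]
    constructor
    · intro h
      have h2 : s ^ (n + 1) * G n s = s ^ (n + 1) * (1 / (δ * Nat.factorial n)) := by
        rw [mul_one_div]; linarith
      exact mul_left_cancel₀ (by positivity) h2
    · intro h
      rw [h]; field_simp
  constructor
  · -- existence and uniqueness
    -- choose a and M
    set c := 1 / (δ * Nat.factorial n) with hcdef
    set a : ℝ := (((n:ℝ) + 2) * (1 - δ / ((n:ℝ) + 1))) / 2 with hadef
    have ha0 : 0 < a := by
      have : 0 < 1 - δ / ((n:ℝ) + 1) := by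
        rw [sub_pos, div_lt_one (by positivity)]; exact hδ1
      positivity
    have ha2 : a < (n : ℝ) + 2 := by
      have h1 : 1 - δ / ((n:ℝ) + 1) < 1 := by
        have : 0 < δ / ((n:ℝ) + 1) := by positivity
        linarith
      nlinarith
    have hGa : G n a < c := by
      have hb := Gbound n ha0.le ha2
      refine hb.trans_lt ?_
      rw [hcdef]
      rw [div_lt_div_iff₀ (mul_pos (by positivity) (by linarith)) (by positivity)]
      have hfn1 : ((Nat.factorial (n+1)) : ℝ) = ((n:ℝ)+1) * (Nat.factorial n) := by
        push_cast [Nat.factorial_succ]; ring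
      rw [hfn1]
      -- need: (n+2) * (δ * n!) < 1 * ((n+1) * n! * (n+2-a))
      have hkey : ((n:ℝ)+2) * δ < ((n:ℝ)+1) * (((n:ℝ)+2) - a) := by
        have : ((n:ℝ)+2) - a = ((n:ℝ)+2) * (1 + δ / ((n:ℝ)+1)) / 2 := by
          rw [hadef]; field_simp; ring
        rw [this]
        have hexp : ((n:ℝ)+1) * (((n:ℝ)+2) * (1 + δ / ((n:ℝ)+1)) / 2)
            = ((n:ℝ)+2) * (((n:ℝ)+1) + δ) / 2 := by
          field_simp
        rw [hexp]
        nlinarith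
      nlinarith [mul_lt_mul_of_pos_right hkey hfn]
    set M : ℝ := a + 1 + ((n:ℝ)+1) * ((n:ℝ)+2) / δ with hMdef
    have haM : a < M := by
      have hpos : 0 < ((n:ℝ)+1) * ((n:ℝ)+2) / δ := by positivity
      rw [hMdef]; linarith
    have hM0 : 0 < M := ha0.trans haM
    have hGM : c < G n M := by
      refine lt_of_lt_of_le ?_ (Gterm n hM0.le)
      rw [hcdef, div_lt_div_iff₀ (by positivity) (by positivity)]
      have hfn2 : ((Nat.factorial (n+2)) : ℝ) = ((n:ℝ)+2) * (((n:ℝ)+1) * (Nat.factorial n)) := by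
        push_cast [Nat.factorial_succ]; ring
      rw [hfn2]
      have hM' : ((n:ℝ)+1) * ((n:ℝ)+2) / δ < M := by
        rw [hMdef]; linarith
      rw [div_lt_iff₀ hδ0] at hM'
      nlinarith
    -- IVT on H(s) = exp s - T n s - s^(n+1) * c
    set H : ℝ → ℝ := fun s => Real.exp s - T n s - s ^ (n+1) * c with hHdef
    have hHcont : ContinuousOn H (Set.Icc a M) := by
      apply Continuous.continuousOn
      apply Continuous.sub
      apply Continuous.sub Real.continuous_exp
      · unfold T
        exact continuous_finset_sum _ (fun k _ => (continuous_pow k).div_const _)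
      · exact (continuous_pow (n+1)).mul continuous_const
    have hHG : ∀ s : ℝ, H s = s ^ (n+1) * (G n s - c) := by
      intro s
      rw [hHdef]
      simp only
      rw [exp_eq_T_add n s]
      ring
    have hHa : H a < 0 := by
      rw [hHG]
      apply mul_neg_of_pos_of_neg (by positivity)
      linarith
    have hHM : 0 < H M := by
      rw [hHG]
      apply mul_pos (by positivity)
      linarith
    have hIVT := intermediate_value_Icc haM.le hHcont
    have h0mem : (0:ℝ) ∈ Set.Icc (H a) (H M) := ⟨hHa.le, hHM.le⟩
    obtain ⟨s, hsmem, hs0⟩ := hIVT h0mem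
    have hspos : 0 < s := lt_of_lt_of_le ha0 hsmem.1
    have hGs : G n s = c := by
      have h := hHG s
      rw [hs0] at h
      have hne : s ^ (n+1) ≠ 0 := by positivity
      have h2 := (mul_eq_zero.mp h.symm).resolve_left hne
      linarith
    refine ⟨s, ⟨hspos, (key s hspos).mpr hGs⟩, ?_⟩
    intro t ⟨ht0, hteq⟩
    have hGt : G n t = c := (key t ht0).mp hteq
    by_contra hne
    rcases lt_or_gt_of_ne hne with h | h
    · have := Gmono n ht0.le h
      rw [hGt, hGs] at this; exact lt_irrefl _ this
    · have := Gmono n hspos.le h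
      rw [hGt, hGs] at this; exact lt_irrefl _ this
  · -- lower bound
    intro s hs heq
    have hGs : G n s = 1 / (δ * Nat.factorial n) := (key s hs).mp heq
    by_cases hbig : (n:ℝ) + 1 ≤ s
    · linarith
    push_neg at hbig
    have hs2 : s < (n:ℝ) + 2 := by linarith
    have hb := Gbound n hs.le hs2
    rw [hGs] at hb
    have hfn1 : ((Nat.factorial (n+1)) : ℝ) = ((n:ℝ)+1) * (Nat.factorial n) := by
      push_cast [Nat.factorial_succ]; ring
    rw [hfn1] at hb
    rw [div_le_div_iff₀ (by positivity) (mul_pos (by positivity) (by linarith))] at hb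
    -- hb : 1 * ((n+1) * n! * (n+2-s)) ≤ (n+2) * (δ * n!)
    have hineq : ((n:ℝ)+1) * (((n:ℝ)+2) - s) ≤ ((n:ℝ)+2) * δ := by
      nlinarith
    -- s ≥ (n+2)(n+1-δ)/(n+1) > n+1-δ
    have hd : 0 < (n:ℝ) + 1 - δ := by linarith
    nlinarith
end

section
/- Let n ≥ 0 be an integer, δ ∈ (0, n+1), and let s_n(δ) be the unique positive solution of e^s = 1 + s/1! + ... + s^n/n! + s^{n+1}/(δ·n!). Then the maximum value of E_{n,δ} over s ≥ 0 equals s_n(δ)^{n+1-δ}/(n!·δ·e^{s_n(δ)}). -/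
open Real Finset

/-- The function `E_{n,δ}`. -/
noncomputable def E (n : ℕ) (δ : ℝ) (s : ℝ) : ℝ := (1 - T n s * Real.exp (-s)) / s ^ δ

lemma T_hasDerivAt (n : ℕ) (s : ℝ) :
    HasDerivAt (T n) (T n s - s ^ n / Nat.factorial n) s := by
  induction n with
  | zero =>
    have h : T 0 = fun _ : ℝ => (1:ℝ) := by
      funext x; simp [T]
    rw [h]
    simpa [T] using hasDerivAt_const s (1:ℝ)
  | succ n ih =>
    have h : T (n+1) = fun x : ℝ => T n x + x ^ (n+1) / Nat.factorial (n+1) := by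
      funext x; simp [T, Finset.sum_range_succ]
    rw [h]
    have hp : HasDerivAt (fun x : ℝ => x ^ (n+1) / Nat.factorial (n+1))
        (s ^ n / Nat.factorial n) s := by
      have := (hasDerivAt_pow (n+1) s).div_const (Nat.factorial (n+1) : ℝ)
      refine this.congr_deriv ?_
      have h1 : (Nat.factorial (n+1) : ℝ) = (n+1) * Nat.factorial n := by
        push_cast [Nat.factorial_succ]; ring
      rw [h1]
      have h2 : (Nat.factorial n : ℝ) ≠ 0 := Nat.cast_ne_zero.2 (Nat.factorial_ne_zero n)
      field_simp
      push_cast [Nat.add_sub_cancel_left]; ring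
    have := ih.add hp
    refine this.congr_deriv ?_
    have h : T (n+1) s = T n s + s ^ (n+1) / Nat.factorial (n+1) := by
      simp [T, Finset.sum_range_succ]
    simp only []; ring

lemma R_hasDerivAt (n : ℕ) (s : ℝ) :
    HasDerivAt (fun x : ℝ => 1 - T n x * Real.exp (-x))
      (Real.exp (-s) * s ^ n / Nat.factorial n) s := by
  have hexp : HasDerivAt (fun x : ℝ => Real.exp (-x)) (-Real.exp (-s)) s := by
    simpa [Function.comp_def] using (Real.hasDerivAt_exp (-s)).comp s (hasDerivAt_neg s)
  have := ((T_hasDerivAt n s).mul hexp).const_sub (1:ℝ)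
  refine this.congr_deriv ?_
  ring

lemma g_hasDerivAt (n : ℕ) (δ : ℝ) (s : ℝ) :
    HasDerivAt (fun x : ℝ => Real.exp (-x) * x ^ (n+1) / Nat.factorial n
        - δ * (1 - T n x * Real.exp (-x)))
      (Real.exp (-s) * s ^ n / Nat.factorial n * (((n:ℝ)+1) - δ - s)) s := by
  have hexp : HasDerivAt (fun x : ℝ => Real.exp (-x)) (-Real.exp (-s)) s := by
    simpa [Function.comp_def] using (Real.hasDerivAt_exp (-s)).comp s (hasDerivAt_neg s)
  have h1 : HasDerivAt (fun x : ℝ => Real.exp (-x) * x ^ (n+1) / Nat.factorial n)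
      ((-Real.exp (-s) * s ^ (n+1) + Real.exp (-s) * (((n:ℝ)+1) * s ^ n)) / Nat.factorial n) s := by
    have := (hexp.mul (hasDerivAt_pow (n+1) s)).div_const (Nat.factorial n : ℝ)
    refine this.congr_deriv ?_
    push_cast
    ring
  have := h1.sub ((R_hasDerivAt n s).const_mul δ)
  refine this.congr_deriv ?_
  have h2 : (Nat.factorial n : ℝ) ≠ 0 := Nat.cast_ne_zero.2 (Nat.factorial_ne_zero n)
  field_simp
  ring

lemma E_hasDerivAt (n : ℕ) (δ : ℝ) (s : ℝ) (hs : 0 < s) :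
    HasDerivAt (E n δ)
      ((Real.exp (-s) * s ^ (n+1) / Nat.factorial n - δ * (1 - T n s * Real.exp (-s)))
        * s ^ (-δ - 1)) s := by
  have hpow : HasDerivAt (fun x : ℝ => x ^ δ) (δ * s ^ (δ - 1)) s :=
    Real.hasDerivAt_rpow_const (Or.inl hs.ne')
  have hp : (0:ℝ) < s ^ δ := Real.rpow_pos_of_pos hs δ
  have := (R_hasDerivAt n s).div hpow hp.ne'
  have hE : E n δ = fun x : ℝ => (1 - T n x * Real.exp (-x)) / x ^ δ := rfl
  rw [hE]
  refine this.congr_deriv ?_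
  have h1 : s ^ (δ - 1) = s ^ δ / s := by
    rw [Real.rpow_sub hs, Real.rpow_one]
  have h2 : s ^ (-δ - 1) = 1 / (s ^ δ * s) := by
    rw [show -δ - 1 = -(δ + 1) by ring, Real.rpow_neg hs.le, Real.rpow_add hs, Real.rpow_one]
    simp
  have h3 : s ^ (n+1) = s ^ n * s := pow_succ s n
  have h2' : (Nat.factorial n : ℝ) ≠ 0 := Nat.cast_ne_zero.2 (Nat.factorial_ne_zero n)
  rw [h1, h2, h3]
  field_simp

lemma T_zero (n : ℕ) : T n 0 = 1 := by
  rw [T, Finset.sum_eq_single 0]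
  · simp
  · intro k hk hk0
    simp [zero_pow hk0]
  · simp

theorem stmt5 (n : ℕ) (δ : ℝ) (hδ : δ ∈ Set.Ioo 0 ((n : ℝ) + 1))
    (s₀ : ℝ) (hs₀ : 0 < s₀)
    (heq : Real.exp s₀ = T n s₀ + s₀ ^ (n + 1) / (δ * Nat.factorial n)) :
    IsGreatest (E n δ '' Set.Ici 0)
      (s₀ ^ ((n : ℝ) + 1 - δ) / (Nat.factorial n * δ * Real.exp s₀)) := by
  obtain ⟨hδ0, hδn⟩ := hδ
  have hfac : (Nat.factorial n : ℝ) ≠ 0 := Nat.cast_ne_zero.2 (Nat.factorial_ne_zero n)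
  have hfacpos : (0:ℝ) < Nat.factorial n := Nat.cast_pos.2 (Nat.factorial_pos n)
  set g : ℝ → ℝ := fun x => Real.exp (-x) * x ^ (n+1) / Nat.factorial n
      - δ * (1 - T n x * Real.exp (-x)) with hg
  -- g s₀ = 0
  have hexps₀ : Real.exp (-s₀) * Real.exp s₀ = 1 := by
    rw [← Real.exp_add]; simp
  have hgs₀ : g s₀ = 0 := by
    have h1 : Real.exp (-s₀) * (T n s₀ + s₀ ^ (n + 1) / (δ * Nat.factorial n)) = 1 := by
      rw [← heq]; linarith [hexps₀]
    simp only [hg]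
    field_simp at h1 ⊢
    nlinarith [h1]
  have hg0 : g 0 = 0 := by
    simp [hg, T_zero]
  set c : ℝ := (n : ℝ) + 1 - δ with hc
  have hcpos : 0 < c := by simp [hc]; linarith
  -- g is strictly monotone on [0, c]
  have hgderiv : ∀ x : ℝ, deriv g x
      = Real.exp (-x) * x ^ n / Nat.factorial n * (((n:ℝ)+1) - δ - x) := fun x =>
    (g_hasDerivAt n δ x).deriv
  have hgcont : Continuous g := by
    have : Differentiable ℝ g := fun x => (g_hasDerivAt n δ x).differentiableAt
    exact this.continuous
  have hmono : StrictMonoOn g (Set.Icc 0 c) := by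
    apply strictMonoOn_of_deriv_pos (convex_Icc 0 c) hgcont.continuousOn
    intro x hx
    rw [interior_Icc] at hx
    rw [hgderiv]
    have hx0 : 0 < x := hx.1
    have : 0 < ((n:ℝ)+1) - δ - x := by simp [hc] at hx; linarith [hx.2]
    positivity
  have hanti : StrictAntiOn g (Set.Ici c) := by
    apply strictAntiOn_of_deriv_neg (convex_Ici c) hgcont.continuousOn
    intro x hx
    rw [interior_Ici] at hx
    rw [hgderiv]
    have hx0 : 0 < x := lt_trans hcpos hx
    have h1 : ((n:ℝ)+1) - δ - x < 0 := by simp [hc] at hx; linarith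
    have h2 : 0 < Real.exp (-x) * x ^ n / Nat.factorial n := by positivity
    nlinarith
  -- c < s₀
  have hcs₀ : c < s₀ := by
    by_contra h
    push_neg at h
    have := hmono (Set.mem_Icc.2 ⟨le_refl 0, hcpos.le⟩) (Set.mem_Icc.2 ⟨hs₀.le, h⟩) hs₀
    rw [hg0, hgs₀] at this
    exact lt_irrefl 0 this
  -- sign of g
  have hgpos : ∀ x, 0 < x → x < s₀ → 0 < g x := by
    intro x hx0 hxs
    rcases le_or_gt x c with h | h
    · have := hmono (Set.mem_Icc.2 ⟨le_refl 0, hcpos.le⟩) (Set.mem_Icc.2 ⟨hx0.le, h⟩) hx0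
      rwa [hg0] at this
    · have := hanti (Set.mem_Ici.2 h.le) (Set.mem_Ici.2 hcs₀.le) hxs
      rwa [hgs₀] at this
  have hgneg : ∀ x, s₀ < x → g x < 0 := by
    intro x hxs
    have := hanti (Set.mem_Ici.2 hcs₀.le) (Set.mem_Ici.2 (hcs₀.le.trans hxs.le)) hxs
    rwa [hgs₀] at this
  -- E derivative sign, monotonicity
  have hEcont : ∀ x : ℝ, 0 < x → ContinuousAt (E n δ) x := fun x hx =>
    (E_hasDerivAt n δ x hx).differentiableAt.continuousAt
  have hEderiv : ∀ x : ℝ, 0 < x → deriv (E n δ) x = g x * x ^ (-δ - 1) := fun x hx =>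
    (E_hasDerivAt n δ x hx).deriv
  have hEmono : StrictMonoOn (E n δ) (Set.Ioc 0 s₀) := by
    apply strictMonoOn_of_deriv_pos (convex_Ioc 0 s₀)
      (fun x hx => ((hEcont x hx.1).continuousWithinAt))
    intro x hx
    rw [interior_Ioc] at hx
    rw [hEderiv x hx.1]
    exact mul_pos (hgpos x hx.1 hx.2) (Real.rpow_pos_of_pos hx.1 _)
  have hEanti : StrictAntiOn (E n δ) (Set.Ici s₀) := by
    apply strictAntiOn_of_deriv_neg (convex_Ici s₀)
      (fun x hx => ((hEcont x (hs₀.trans_le hx)).continuousWithinAt))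
    intro x hx
    rw [interior_Ici] at hx
    have hx0 : 0 < x := hs₀.trans hx
    rw [hEderiv x hx0]
    exact mul_neg_of_neg_of_pos (hgneg x hx) (Real.rpow_pos_of_pos hx0 _)
  -- E s₀ = M
  have hkey : 1 - T n s₀ * Real.exp (-s₀) = Real.exp (-s₀) * s₀ ^ (n + 1) / (δ * Nat.factorial n) := by
    have h1 : Real.exp (-s₀) * (T n s₀ + s₀ ^ (n + 1) / (δ * Nat.factorial n)) = 1 := by
      rw [← heq]; linarith [hexps₀]
    field_simp at h1 ⊢
    nlinarith [h1]
  have hEs₀ : E n δ s₀ = s₀ ^ ((n : ℝ) + 1 - δ) / (Nat.factorial n * δ * Real.exp s₀) := by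
    rw [E, hkey]
    have h1 : s₀ ^ ((n : ℝ) + 1 - δ) = s₀ ^ ((n:ℝ)+1) / s₀ ^ δ := by
      rw [Real.rpow_sub hs₀]
    have h2 : s₀ ^ ((n:ℝ)+1) = s₀ ^ (n+1) := by
      rw [show ((n:ℝ)+1) = ((n+1 : ℕ) : ℝ) by push_cast; ring, Real.rpow_natCast]
    have h3 : Real.exp (-s₀) = 1 / Real.exp s₀ := by
      rw [Real.exp_neg]; exact inv_eq_one_div _
    have hpδ : s₀ ^ δ ≠ 0 := (Real.rpow_pos_of_pos hs₀ δ).ne'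
    rw [h1, h2, h3]
    have hexp : Real.exp s₀ ≠ 0 := (Real.exp_pos s₀).ne'
    field_simp
  have hMpos : 0 < s₀ ^ ((n : ℝ) + 1 - δ) / (Nat.factorial n * δ * Real.exp s₀) := by
    have := Real.rpow_pos_of_pos hs₀ ((n : ℝ) + 1 - δ)
    have := Real.exp_pos s₀
    positivity
  constructor
  · exact ⟨s₀, Set.mem_Ici.2 hs₀.le, hEs₀⟩
  · rintro y ⟨s, hs, rfl⟩
    rw [Set.mem_Ici] at hs
    rcases eq_or_lt_of_le hs with h | h
    · have hE0 : E n δ 0 = 0 := by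
        simp [E, T_zero]
      rw [← h, hE0]
      exact hMpos.le
    · rw [← hEs₀]
      rcases lt_trichotomy s s₀ with h2 | h2 | h2
      · exact (hEmono (Set.mem_Ioc.2 ⟨h, h2.le⟩) (Set.mem_Ioc.2 ⟨hs₀, le_refl _⟩) h2).le
      · rw [h2]
      · exact (hEanti (Set.mem_Ici.2 (le_refl _)) (Set.mem_Ici.2 h2.le) h2).le
end

section
/- Let n ≥ 0 be an integer and δ ∈ (0, n+1). Then s_n(δ) > (n+1-δ) + ((n+1-δ) + δ²/4)^{1/2} - δ/2. -/
open Real Finset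

noncomputable def cc (n j : ℕ) : ℝ := (Nat.factorial n : ℝ) / (Nat.factorial (n+1+j))

noncomputable def qq (n k : ℕ) : ℝ := ∑ i ∈ Finset.range (k+1), cc n i * cc n (k-i)

lemma cc_pos (n j : ℕ) : 0 < cc n j := by
  unfold cc
  positivity

lemma qq_pos (n k : ℕ) : 0 < qq n k := by
  unfold qq
  apply Finset.sum_pos (fun i _ => mul_pos (cc_pos n i) (cc_pos n _))
  exact ⟨0, Finset.mem_range.2 (Nat.succ_pos k)⟩

lemma cc_rec (n j : ℕ) : cc n j = ((n:ℝ)+2+j) * cc n (j+1) := by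
  unfold cc
  rw [show n+1+(j+1) = (n+1+j)+1 from rfl, Nat.factorial_succ]
  have h1 : (Nat.factorial (n+1+j) : ℝ) ≠ 0 := Nat.cast_ne_zero.2 (Nat.factorial_ne_zero _)
  push_cast
  field_simp
  ring

lemma cc_zero (n : ℕ) : ((n:ℝ)+1) * cc n 0 = 1 := by
  unfold cc
  rw [show n+1+0 = n+1 from rfl, Nat.factorial_succ]
  have h1 : (Nat.factorial n : ℝ) ≠ 0 := Nat.cast_ne_zero.2 (Nat.factorial_ne_zero _)
  push_cast
  field_simp

lemma qq_rec (n k : ℕ) :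
    (2*((n:ℝ)+1)+k+1) * qq n (k+1) = 2*(qq n k + cc n (k+1)) := by
  have hA : ∑ i ∈ Finset.range (k+2), ((n:ℝ)+1+i) * cc n i * cc n (k+1-i)
      = qq n k + cc n (k+1) := by
    rw [Finset.sum_range_succ']
    have h0 : ((n:ℝ)+1+((0:ℕ):ℝ)) * cc n 0 * cc n (k+1-0) = cc n (k+1) := by
      push_cast
      rw [show (n:ℝ)+1+0 = (n:ℝ)+1 by ring, mul_assoc, ← mul_assoc, cc_zero]
      simp
    rw [h0]
    congr 1
    unfold qq
    apply Finset.sum_congr rfl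
    intro i _
    rw [show k+1-(i+1) = k-i by omega, cc_rec n i]
    push_cast
    ring
  have hB : ∑ i ∈ Finset.range (k+2), cc n i * (((n:ℝ)+1+((k+1-i:ℕ):ℝ)) * cc n (k+1-i))
      = qq n k + cc n (k+1) := by
    have h1 : ∑ i ∈ Finset.range (k+2), cc n i * (((n:ℝ)+1+((k+1-i:ℕ):ℝ)) * cc n (k+1-i))
        = ∑ j ∈ Finset.range (k+2),
            ((n:ℝ)+1+((k+1-j:ℕ):ℝ)) * cc n (k+1-j) * cc n (k+1-(k+1-j)) := by
      apply Finset.sum_congr rfl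
      intro i hi
      have hik : i ≤ k+1 := Nat.lt_succ_iff.mp (Finset.mem_range.1 hi)
      rw [show k+1-(k+1-i) = i by omega]
      ring
    rw [h1]
    rw [show (fun j => ((n:ℝ)+1+((k+1-j:ℕ):ℝ)) * cc n (k+1-j) * cc n (k+1-(k+1-j)))
        = fun j => (fun i => ((n:ℝ)+1+((i:ℕ):ℝ)) * cc n i * cc n (k+1-i)) (k+2-1-j) from rfl]
    rw [Finset.sum_range_reflect (fun i => ((n:ℝ)+1+((i:ℕ):ℝ)) * cc n i * cc n (k+1-i)) (k+2)]
    exact hA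
  have hsum : (2*((n:ℝ)+1)+k+1) * qq n (k+1)
      = (∑ i ∈ Finset.range (k+2), ((n:ℝ)+1+i) * cc n i * cc n (k+1-i))
      + ∑ i ∈ Finset.range (k+2), cc n i * (((n:ℝ)+1+((k+1-i:ℕ):ℝ)) * cc n (k+1-i)) := by
    unfold qq
    rw [Finset.mul_sum, ← Finset.sum_add_distrib]
    apply Finset.sum_congr rfl
    intro i hi
    have hik : i ≤ k+1 := Nat.lt_succ_iff.mp (Finset.mem_range.1 hi)
    rw [Nat.cast_sub hik]
    push_cast
    ring
  rw [hsum, hA, hB]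
  ring

lemma qq_zero (n : ℕ) : qq n 0 = cc n 0 * cc n 0 := by
  unfold qq; simp

lemma key (n : ℕ) : ∀ k : ℕ, (6*((n:ℝ)+1) + k - k^2) * qq n k ≤ 6*(k+1)*cc n k := by
  intro k
  induction k with
  | zero =>
    simp only [Nat.cast_zero]
    rw [qq_zero]
    have h0 := cc_zero n
    have hc := cc_pos n 0
    nlinarith [cc_zero n, cc_pos n 0]
  | succ k ih =>
    set m : ℝ := (n:ℝ)+1 with hm
    have hmpos : 0 < m := by positivity
    by_cases hE : 6*m + ((k:ℝ)+1) - ((k:ℝ)+1)^2 ≤ 0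
    · push_cast
      calc (6*m + ((k:ℝ)+1) - ((k:ℝ)+1)^2) * qq n (k+1) ≤ 0 :=
            mul_nonpos_of_nonpos_of_nonneg hE (qq_pos n (k+1)).le
        _ ≤ 6*((k:ℝ)+1+1)*cc n (k+1) :=
            mul_nonneg (by positivity) (cc_pos n (k+1)).le
    · push_neg at hE
      have h2k : 0 < 6*m + (k:ℝ) - (k:ℝ)^2 := by nlinarith
      have hrec := qq_rec n k
      have hccrec := cc_rec n k
      have hq1 : 0 < qq n (k+1) := qq_pos n (k+1)
      have hq0 : 0 < qq n k := qq_pos n k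
      have hc1 : 0 < cc n (k+1) := cc_pos n (k+1)
      -- scaled IH
      have ihs : (6*m + (k:ℝ) - (k:ℝ)^2) * qq n k ≤ 6*((k:ℝ)+1)*(m+(k:ℝ)+1)*cc n (k+1) := by
        calc (6*m + (k:ℝ) - (k:ℝ)^2) * qq n k ≤ 6*((k:ℝ)+1)*cc n k := ih
          _ = 6*((k:ℝ)+1)*(m+(k:ℝ)+1)*cc n (k+1) := by rw [hccrec]; push_cast [hm]; ring
      -- main polynomial step, after multiplying the goal by (2m+k+1)(6m+k-k²) > 0
      have hmul : 0 < (2*m+(k:ℝ)+1) * (6*m + (k:ℝ) - (k:ℝ)^2) := by positivity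
      rw [show ((k:ℕ)+1 : ℕ) = k+1 from rfl]
      push_cast
      rw [← mul_le_mul_iff_right₀ hmul]
      have hexp : (2*m+(k:ℝ)+1) * (6*m + (k:ℝ) - (k:ℝ)^2) *
          ((6*m + ((k:ℝ)+1) - ((k:ℝ)+1)^2) * qq n (k+1))
          = (6*m + ((k:ℝ)+1) - ((k:ℝ)+1)^2) * (6*m + (k:ℝ) - (k:ℝ)^2) *
            ((2*m+(k:ℝ)+1) * qq n (k+1)) := by ring
      rw [hexp, hrec]
      nlinarith [mul_le_mul_of_nonneg_left ihs (by nlinarith : (0:ℝ) ≤ 2*(6*m + ((k:ℝ)+1) - ((k:ℝ)+1)^2)),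
        mul_pos hc1 hmpos, hc1.le, mul_nonneg hc1.le hmpos.le,
        mul_nonneg (mul_nonneg hc1.le (by positivity : (0:ℝ) ≤ (k:ℝ))) (by positivity : (0:ℝ) ≤ (k:ℝ)+1)]

lemma coef_identity (n k : ℕ) :
    qq n k - 2*((n:ℝ)+1)*qq n (k+1) + (((n:ℝ)+1)^2-((n:ℝ)+1))*qq n (k+2)
      + 3*cc n (k+1) + (1-3*((n:ℝ)+1))*cc n (k+2)
    = (1/4)*(((((k:ℝ)+2)^2-((k:ℝ)+2)-6*((n:ℝ)+1))*qq n (k+2)) + 6*((k:ℝ)+3)*cc n (k+2)) := by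
  have e1 := qq_rec n (k+1)
  have e2 := qq_rec n k
  have e3 := cc_rec n (k+1)
  push_cast at e1 e2 e3
  set M : ℝ := (n:ℝ)+1
  set K : ℝ := (k:ℝ)
  linear_combination ((2*M-K-1)/4) * e1 - (1/2) * e2 + 2 * e3

lemma coef_nonneg (n k : ℕ) :
    0 ≤ qq n k - 2*((n:ℝ)+1)*qq n (k+1) + (((n:ℝ)+1)^2-((n:ℝ)+1))*qq n (k+2)
      + 3*cc n (k+1) + (1-3*((n:ℝ)+1))*cc n (k+2) := by
  rw [coef_identity]
  have hk := key n (k+2)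
  push_cast at hk
  nlinarith [hk]

lemma cc0_val (n : ℕ) : cc n 0 = 1/((n:ℝ)+1) := by
  have h := cc_zero n
  have : ((n:ℝ)+1) ≠ 0 := by positivity
  field_simp
  linarith [h]

lemma cc1_val (n : ℕ) : cc n 1 = 1/(((n:ℝ)+1)*((n:ℝ)+2)) := by
  have h := cc_rec n 0
  rw [cc0_val] at h
  push_cast at h
  have h1 : ((n:ℝ)+1) ≠ 0 := by positivity
  have h2 : ((n:ℝ)+2) ≠ 0 := by positivity
  field_simp at h ⊢
  linarith [h]

lemma cc2_val (n : ℕ) : cc n 2 = 1/(((n:ℝ)+1)*((n:ℝ)+2)*((n:ℝ)+3)) := by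
  have h := cc_rec n 1
  rw [cc1_val] at h
  push_cast at h
  have h1 : ((n:ℝ)+1) ≠ 0 := by positivity
  have h2 : ((n:ℝ)+2) ≠ 0 := by positivity
  have h3 : ((n:ℝ)+3) ≠ 0 := by positivity
  field_simp at h ⊢
  linarith [h]

lemma W2pos (n : ℕ) :
    0 < qq n 0 - 2*((n:ℝ)+1)*qq n 1 + (((n:ℝ)+1)^2-((n:ℝ)+1))*qq n 2
      + 3*cc n 1 + (1-3*((n:ℝ)+1))*cc n 2 := by
  have hq0 : qq n 0 = cc n 0 * cc n 0 := by unfold qq; simp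
  have hq1 : qq n 1 = cc n 0 * cc n 1 + cc n 1 * cc n 0 := by
    unfold qq
    rw [Finset.sum_range_succ, Finset.sum_range_one]
  have hq2 : qq n 2 = cc n 0 * cc n 2 + cc n 1 * cc n 1 + cc n 2 * cc n 0 := by
    unfold qq
    rw [Finset.sum_range_succ, Finset.sum_range_succ, Finset.sum_range_one]
  rw [hq0, hq1, hq2, cc0_val, cc1_val, cc2_val]
  have h1 : (0:ℝ) < (n:ℝ)+1 := by positivity
  have h2 : (0:ℝ) < (n:ℝ)+2 := by positivity
  have h3 : (0:ℝ) < (n:ℝ)+3 := by positivity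
  have hval : 1 / ((n:ℝ) + 1) * (1 / ((n:ℝ) + 1)) -
            2 * ((n:ℝ) + 1) * (1 / ((n:ℝ) + 1) * (1 / (((n:ℝ) + 1) * ((n:ℝ) + 2))) + 1 / (((n:ℝ) + 1) * ((n:ℝ) + 2)) * (1 / ((n:ℝ) + 1))) +
          (((n:ℝ) + 1) ^ 2 - ((n:ℝ) + 1)) *
            (1 / ((n:ℝ) + 1) * (1 / (((n:ℝ) + 1) * ((n:ℝ) + 2) * ((n:ℝ) + 3))) +
                1 / (((n:ℝ) + 1) * ((n:ℝ) + 2)) * (1 / (((n:ℝ) + 1) * ((n:ℝ) + 2))) +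
              1 / (((n:ℝ) + 1) * ((n:ℝ) + 2) * ((n:ℝ) + 3)) * (1 / ((n:ℝ) + 1))) +
        3 * (1 / (((n:ℝ) + 1) * ((n:ℝ) + 2))) +
      (1 - 3 * ((n:ℝ) + 1)) * (1 / (((n:ℝ) + 1) * ((n:ℝ) + 2) * ((n:ℝ) + 3)))
      = 2 / (((n:ℝ) + 1) ^ 2 * ((n:ℝ) + 2) ^ 2 * ((n:ℝ) + 3)) := by
    field_simp
    ring
  rw [hval]
  positivity

lemma cc_le (n k : ℕ) : cc n k ≤ 1/(Nat.factorial k : ℝ) := by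
  unfold cc
  rw [div_le_div_iff₀ (by positivity) (by positivity)]
  have h1 : Nat.factorial n * Nat.factorial k ≤ Nat.factorial (n+k) :=
    Nat.le_of_dvd (Nat.factorial_pos _) (Nat.factorial_mul_factorial_dvd_factorial_add n k)
  have h2 : Nat.factorial (n+k) ≤ Nat.factorial (n+1+k) :=
    Nat.factorial_le (by omega)
  calc (Nat.factorial n : ℝ) * Nat.factorial k ≤ (Nat.factorial (n+1+k) : ℝ) := by
        exact_mod_cast le_trans h1 h2
    _ = 1 * Nat.factorial (n+1+k) := by ring

lemma qq_le (n k : ℕ) : qq n k ≤ (2:ℝ)^k / (Nat.factorial k : ℝ) := by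
  unfold qq
  have hstep : ∀ i ∈ Finset.range (k+1), cc n i * cc n (k-i)
      ≤ ((k.choose i : ℝ))/(Nat.factorial k : ℝ) := by
    intro i hi
    have hik : i ≤ k := Nat.lt_succ_iff.mp (Finset.mem_range.1 hi)
    have h1 : cc n i * cc n (k-i) ≤ (1/(Nat.factorial i : ℝ)) * (1/(Nat.factorial (k-i) : ℝ)) :=
      mul_le_mul (cc_le n i) (cc_le n (k-i)) (cc_pos n _).le (by positivity)
    have h2 : (1/(Nat.factorial i : ℝ)) * (1/(Nat.factorial (k-i) : ℝ))
        = ((k.choose i : ℝ))/(Nat.factorial k : ℝ) := by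
      have := Nat.choose_mul_factorial_mul_factorial hik
      have hcast : ((k.choose i : ℕ) : ℝ) * (Nat.factorial i : ℝ) * (Nat.factorial (k-i) : ℝ)
          = (Nat.factorial k : ℝ) := by exact_mod_cast congrArg (Nat.cast (R := ℝ)) this
      field_simp
      linarith [hcast]
    linarith [h1, h2.le]
  calc ∑ i ∈ Finset.range (k+1), cc n i * cc n (k-i)
      ≤ ∑ i ∈ Finset.range (k+1), ((k.choose i : ℝ))/(Nat.factorial k : ℝ) :=
        Finset.sum_le_sum hstep
    _ = (2:ℝ)^k / (Nat.factorial k : ℝ) := by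
        rw [← Finset.sum_div]
        congr 1
        have := Nat.sum_range_choose k
        exact_mod_cast congrArg (Nat.cast (R := ℝ)) this



set_option maxHeartbeats 1000000 in
theorem stmt8 (n : ℕ) (δ : ℝ) (hδ : δ ∈ Set.Ioo 0 ((n : ℝ) + 1))
    (s₀ : ℝ) (hs₀ : 0 < s₀)
    (heq : Real.exp s₀ = T n s₀ + s₀ ^ (n + 1) / (δ * Nat.factorial n)) :
    ((n : ℝ) + 1 - δ) + Real.sqrt (((n : ℝ) + 1 - δ) + δ ^ 2 / 4) - δ / 2 < s₀ := by
  obtain ⟨hδ0, hδm⟩ := hδ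
  set x : ℝ := s₀ with hxdef
  -- basic sequences
  set u : ℕ → ℝ := fun k => cc n k * x^k with hudef
  set v : ℕ → ℝ := fun k => qq n k * x^k with hvdef
  have hu_nonneg : ∀ k, 0 ≤ u k := fun k => by
    have := cc_pos n k
    simp only [hudef]
    positivity
  have hv_nonneg : ∀ k, 0 ≤ v k := fun k => by
    have := qq_pos n k
    simp only [hvdef]
    positivity
  have hu_sum : Summable u := by
    refine Summable.of_nonneg_of_le hu_nonneg (fun k => ?_)
      (Real.summable_pow_div_factorial x)
    calc u k = cc n k * x^k := rfl
      _ ≤ (1/(Nat.factorial k : ℝ)) * x^k :=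
          mul_le_mul_of_nonneg_right (cc_le n k) (by positivity)
      _ = x^k / (Nat.factorial k : ℝ) := by ring
  have hv_sum : Summable v := by
    refine Summable.of_nonneg_of_le hv_nonneg (fun k => ?_)
      (Real.summable_pow_div_factorial (2*x))
    calc v k = qq n k * x^k := rfl
      _ ≤ ((2:ℝ)^k/(Nat.factorial k : ℝ)) * x^k :=
          mul_le_mul_of_nonneg_right (qq_le n k) (by positivity)
      _ = (2*x)^k / (Nat.factorial k : ℝ) := by rw [mul_pow]; ring
  have hu_norm : Summable (fun k => ‖u k‖) := by
    have h : (fun k => ‖u k‖) = u := funext fun k => by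
      rw [Real.norm_eq_abs, abs_of_nonneg (hu_nonneg k)]
    rw [h]; exact hu_sum
  set S : ℝ := ∑' k, u k with hSdef
  have hS_pos : 0 < S := by
    apply Summable.tsum_pos hu_sum hu_nonneg 0
    have := cc_pos n 0
    simp only [hudef, pow_zero, mul_one]
    exact this
  -- Cauchy product
  have hSS : S * S = ∑' k, v k := by
    rw [hSdef, tsum_mul_tsum_eq_tsum_sum_range_of_summable_norm hu_norm hu_norm]
    apply tsum_congr
    intro k
    simp only [hvdef, hudef, qq]
    rw [Finset.sum_mul]
    apply Finset.sum_congr rfl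
    intro i hi
    have hik : i ≤ k := Nat.lt_succ_iff.mp (Finset.mem_range.1 hi)
    have hx : x^i * x^(k-i) = x^k := by
      rw [← pow_add]; congr 1; omega
    calc cc n i * x^i * (cc n (k-i) * x^(k-i))
        = cc n i * cc n (k-i) * (x^i * x^(k-i)) := by ring
      _ = cc n i * cc n (k-i) * x^k := by rw [hx]
  -- exp series and the relation δ S = 1
  have hexp : Real.exp x = ∑' k, x^k / (Nat.factorial k : ℝ) := by
    rw [Real.exp_eq_exp_ℝ, NormedSpace.exp_eq_tsum_div]
  have htail : T n x + (∑' k, x^(k+(n+1)) / (Nat.factorial (k+(n+1)) : ℝ)) = Real.exp x := by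
    rw [hexp]
    exact Summable.sum_add_tsum_nat_add (n+1) (Real.summable_pow_div_factorial x)
  have htail2 : (∑' k, x^(k+(n+1)) / (Nat.factorial (k+(n+1)) : ℝ))
      = (x^(n+1)/(Nat.factorial n : ℝ)) * S := by
    rw [hSdef, ← tsum_mul_left]
    apply tsum_congr
    intro k
    simp only [hudef]
    unfold cc
    have h1 : (Nat.factorial n : ℝ) ≠ 0 := Nat.cast_ne_zero.2 (Nat.factorial_ne_zero _)
    have h2 : (Nat.factorial (n+1+k) : ℝ) ≠ 0 := Nat.cast_ne_zero.2 (Nat.factorial_ne_zero _)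
    rw [show k+(n+1) = n+1+k by omega]
    field_simp
    ring
  have hδS : δ * S = 1 := by
    have hfn : (0:ℝ) < (Nat.factorial n : ℝ) := by
      exact_mod_cast Nat.factorial_pos n
    have hxp : (0:ℝ) < x^(n+1) := by positivity
    have h3 : (x^(n+1)/(Nat.factorial n : ℝ)) * S = x^(n+1) / (δ * (Nat.factorial n : ℝ)) := by
      rw [← htail2]
      linarith [htail, heq]
    have h4 : (δ * S - 1) * (x^(n+1) * (Nat.factorial n : ℝ)) = 0 := by
      have hδ0' : δ ≠ 0 := ne_of_gt hδ0
      have hfn' : (Nat.factorial n : ℝ) ≠ 0 := ne_of_gt hfn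
      field_simp at h3
      linear_combination (x^(n+1) * (Nat.factorial n : ℝ)) * h3
    rcases mul_eq_zero.mp h4 with h5 | h5
    · linarith
    · exfalso
      have : (0:ℝ) < x^(n+1) * (Nat.factorial n : ℝ) := mul_pos hxp hfn
      linarith
  -- shifted sequences
  set sh1 : ℕ → ℝ := fun k => if k = 0 then 0 else cc n (k-1) * x^k with hsh1def
  set sh2 : ℕ → ℝ := fun k => if k = 0 then 0 else qq n (k-1) * x^k with hsh2def
  set sh3 : ℕ → ℝ := fun k => if k ≤ 1 then 0 else qq n (k-2) * x^k with hsh3def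
  have hsh1succ : ∀ k, sh1 (k+1) = u k * x := by
    intro k
    simp only [hsh1def, Nat.succ_ne_zero, if_false, Nat.add_sub_cancel, hudef]
    ring
  have hsh2succ : ∀ k, sh2 (k+1) = v k * x := by
    intro k
    simp only [hsh2def, Nat.succ_ne_zero, if_false, Nat.add_sub_cancel, hvdef]
    ring
  have hsh3succ : ∀ k, sh3 (k+2) = v k * x^2 := by
    intro k
    have h2 : ¬ (k+2 ≤ 1) := by omega
    simp only [hsh3def, h2, if_false, hvdef]
    rw [show k+2-2 = k by omega, pow_add]
    ring
  have hsh1_sum : Summable sh1 := by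
    apply (summable_nat_add_iff 1).mp
    exact Summable.congr (hu_sum.mul_right x) (fun k => (hsh1succ k).symm)
  have hsh2_sum : Summable sh2 := by
    apply (summable_nat_add_iff 1).mp
    exact Summable.congr (hv_sum.mul_right x) (fun k => (hsh2succ k).symm)
  have hsh3_sum : Summable sh3 := by
    apply (summable_nat_add_iff 2).mp
    exact Summable.congr (hv_sum.mul_right (x^2)) (fun k => (hsh3succ k).symm)
  have hsh1_tsum : ∑' k, sh1 k = x * S := by
    rw [Summable.tsum_eq_zero_add hsh1_sum, show sh1 0 = 0 from rfl, zero_add,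
      tsum_congr hsh1succ, tsum_mul_right, ← hSdef]
    ring
  set B : ℝ := ∑' k, v k with hBdef
  have hsh2_tsum : ∑' k, sh2 k = x * B := by
    rw [Summable.tsum_eq_zero_add hsh2_sum, show sh2 0 = 0 from rfl, zero_add,
      tsum_congr hsh2succ, tsum_mul_right, ← hBdef]
    ring
  have hsh3_tsum : ∑' k, sh3 k = x^2 * B := by
    rw [Summable.tsum_eq_zero_add hsh3_sum, show sh3 0 = 0 from rfl, zero_add]
    rw [Summable.tsum_eq_zero_add ((summable_nat_add_iff 1).mpr hsh3_sum),
      show sh3 (0+1) = 0 from rfl, zero_add]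
    rw [tsum_congr (fun k => hsh3succ k), tsum_mul_right, ← hBdef]
    ring
  -- weak bound : m - δ ≤ x
  have hweak : (n:ℝ)+1-δ ≤ x := by
    set E : ℕ → ℝ := fun k => if k = 0 then 1 else 0 with hEdef
    have hE_sum : Summable E := by
      apply (summable_nat_add_iff 1).mp
      have : (fun k : ℕ => E (k+1)) = fun _ => (0:ℝ) := funext fun k => rfl
      rw [this]
      exact summable_zero
    have hD_le : ∀ k, ((n:ℝ)+1) * u k - sh1 k ≤ E k := by
      intro k
      cases k with
      | zero =>
        rw [show sh1 0 = 0 from rfl, show E 0 = 1 from rfl]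
        have : ((n:ℝ)+1) * u 0 = 1 := by
          simp only [hudef, pow_zero, mul_one]
          exact cc_zero n
        linarith
      | succ k =>
        rw [hsh1succ k, show E (k+1) = 0 from rfl]
        simp only [hudef]
        have hrec := cc_rec n k
        have heq2 : ((n:ℝ)+1) * (cc n (k+1) * x^(k+1)) - cc n k * x^k * x
            = -(((k:ℝ)+1) * cc n (k+1)) * x^(k+1) := by
          rw [hrec, pow_succ]
          ring
        rw [heq2]
        have hcp := cc_pos n (k+1)
        have : (0:ℝ) ≤ (((k:ℝ)+1) * cc n (k+1)) * x^(k+1) := by positivity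
        linarith
    have hD_sum : Summable (fun k => ((n:ℝ)+1) * u k - sh1 k) :=
      (hu_sum.mul_left _).sub hsh1_sum
    have hDE : ∑' k, (((n:ℝ)+1) * u k - sh1 k) ≤ ∑' k, E k :=
      Summable.tsum_le_tsum hD_le hD_sum hE_sum
    have hE_tsum : ∑' k, E k = 1 := by
      simp only [hEdef]
      exact tsum_ite_eq 0 1
    have hD_tsum : ∑' k, (((n:ℝ)+1) * u k - sh1 k) = ((n:ℝ)+1) * S - x * S := by
      rw [Summable.tsum_sub (hu_sum.mul_left _) hsh1_sum, tsum_mul_left, hsh1_tsum, ← hSdef]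
    rw [hD_tsum, hE_tsum] at hDE
    nlinarith [hS_pos, hδS, hDE]
  -- main positivity
  set G : ℕ → ℝ := fun k => (1-3*((n:ℝ)+1)) * u k + (3 * sh1 k
      + ((((n:ℝ)+1)^2-((n:ℝ)+1)) * v k + ((-2*((n:ℝ)+1)) * sh2 k + sh3 k))) with hGdef
  have hG_sum2 : Summable (fun k => (-2*((n:ℝ)+1)) * sh2 k + sh3 k) :=
    (hsh2_sum.mul_left _).add hsh3_sum
  have hG_sum3 : Summable (fun k => (((n:ℝ)+1)^2-((n:ℝ)+1)) * v k
      + ((-2*((n:ℝ)+1)) * sh2 k + sh3 k)) := (hv_sum.mul_left _).add hG_sum2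
  have hG_sum4 : Summable (fun k => 3 * sh1 k + ((((n:ℝ)+1)^2-((n:ℝ)+1)) * v k
      + ((-2*((n:ℝ)+1)) * sh2 k + sh3 k))) := (hsh1_sum.mul_left _).add hG_sum3
  have hG_sum : Summable G := (hu_sum.mul_left _).add hG_sum4
  have hG_tsum : ∑' k, G k = (1-3*((n:ℝ)+1)) * S + 3 * (x * S)
      + ((((n:ℝ)+1)^2-((n:ℝ)+1)) * B - 2*((n:ℝ)+1) * (x*B) + x^2 * B) := by
    simp only [hGdef]
    rw [Summable.tsum_add (hu_sum.mul_left _) hG_sum4,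
        Summable.tsum_add (hsh1_sum.mul_left _) hG_sum3,
        Summable.tsum_add (hv_sum.mul_left _) hG_sum2,
        Summable.tsum_add (hsh2_sum.mul_left _) hsh3_sum]
    rw [tsum_mul_left, tsum_mul_left, tsum_mul_left, tsum_mul_left,
        hsh1_tsum, hsh2_tsum, hsh3_tsum, ← hSdef, ← hBdef]
    ring
  -- identify tail values
  have hG0 : G 0 = -2 := by
    simp only [hGdef]
    rw [show sh1 0 = 0 from rfl, show sh2 0 = 0 from rfl, show sh3 0 = 0 from rfl]
    simp only [hudef, hvdef, pow_zero, mul_one]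
    have hq0 : qq n 0 = cc n 0 * cc n 0 := by unfold qq; simp
    rw [hq0]
    have h := cc_zero n
    linear_combination ((((n:ℝ)+1) - 1) * (cc n 0) - 2) * h
  have hG1 : G 1 = 0 := by
    simp only [hGdef]
    rw [show sh1 1 = cc n 0 * x^1 from rfl, show sh2 1 = qq n 0 * x^1 from rfl,
        show sh3 1 = 0 from rfl]
    simp only [hudef, hvdef]
    have hq0 : qq n 0 = cc n 0 * cc n 0 := by unfold qq; simp
    have hq1 : qq n 1 = cc n 0 * cc n 1 + cc n 1 * cc n 0 := by
      unfold qq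
      rw [Finset.sum_range_succ, Finset.sum_range_one]
    rw [hq0, hq1]
    have h0 := cc_zero n
    have h1 := cc_rec n 0
    push_cast at h1
    have hkey : (1-3*((n:ℝ)+1)) * (cc n 1) + 3 * (cc n 0)
        + (((n:ℝ)+1)^2-((n:ℝ)+1)) * (cc n 0 * cc n 1 + cc n 1 * cc n 0)
        + (-2*((n:ℝ)+1)) * (cc n 0 * cc n 0) = 0 := by
      have hc0 : cc n 0 = 1/((n:ℝ)+1) := by
        have hne : ((n:ℝ)+1) ≠ 0 := by positivity
        field_simp
        linarith [h0]
      have hc1 : cc n 1 = 1/(((n:ℝ)+1)*((n:ℝ)+2)) := by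
        rw [hc0] at h1
        have ha : ((n:ℝ)+1) ≠ 0 := by positivity
        have hb : ((n:ℝ)+2) ≠ 0 := by positivity
        field_simp at h1 ⊢
        linarith [h1]
      rw [hc0, hc1]
      field_simp
      ring
    calc (1-3*((n:ℝ)+1)) * (cc n 1 * x^1) + (3 * (cc n 0 * x^1)
        + ((((n:ℝ)+1)^2-((n:ℝ)+1)) * ((cc n 0 * cc n 1 + cc n 1 * cc n 0) * x^1)
        + ((-2*((n:ℝ)+1)) * (cc n 0 * cc n 0 * x^1) + 0)))
        = ((1-3*((n:ℝ)+1)) * (cc n 1) + 3 * (cc n 0)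
        + (((n:ℝ)+1)^2-((n:ℝ)+1)) * (cc n 0 * cc n 1 + cc n 1 * cc n 0)
        + (-2*((n:ℝ)+1)) * (cc n 0 * cc n 0)) * x := by ring
      _ = 0 := by rw [hkey]; ring
  have hG_succ_succ : ∀ k, G (k+2) = (qq n k - 2*((n:ℝ)+1)*qq n (k+1)
      + (((n:ℝ)+1)^2-((n:ℝ)+1))*qq n (k+2) + 3*cc n (k+1)
      + (1-3*((n:ℝ)+1))*cc n (k+2)) * x^(k+2) := by
    intro k
    have e1 : sh1 (k+2) = cc n (k+1) * x^(k+2) := by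
      rw [hsh1succ (k+1)]
      simp only [hudef]
      rw [show k+2 = (k+1)+1 from rfl, pow_succ]
      ring
    have e2 : sh2 (k+2) = qq n (k+1) * x^(k+2) := by
      rw [hsh2succ (k+1)]
      simp only [hvdef]
      rw [show k+2 = (k+1)+1 from rfl, pow_succ]
      ring
    have e3 : sh3 (k+2) = qq n k * x^(k+2) := by
      rw [hsh3succ k]
      simp only [hvdef]
      rw [pow_add]
      ring
    simp only [hGdef, hudef, hvdef]
    rw [e1, e2, e3]
    ring
  have hG_tail_nonneg : ∀ k, 0 ≤ G (k+2) := by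
    intro k
    rw [hG_succ_succ k]
    exact mul_nonneg (coef_nonneg n k) (by positivity)
  have hG2pos : 0 < G 2 := by
    rw [show (2:ℕ) = 0+2 from rfl, hG_succ_succ 0]
    apply mul_pos _ (by positivity)
    exact W2pos n
  -- P > 0
  have hP : 0 < (1-3*((n:ℝ)+1)) * S + 3 * (x * S)
      + ((((n:ℝ)+1)^2-((n:ℝ)+1)) * B - 2*((n:ℝ)+1) * (x*B) + x^2 * B) + 2 := by
    have hsplit : ∑' k, G k = G 0 + (G 1 + ∑' k, G (k+2)) := by
      rw [Summable.tsum_eq_zero_add hG_sum]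
      congr 1
      rw [Summable.tsum_eq_zero_add ((summable_nat_add_iff 1).mpr hG_sum)]
    have htailpos : 0 < ∑' k, G (k+2) := by
      apply Summable.tsum_pos ((summable_nat_add_iff 2).mpr hG_sum) hG_tail_nonneg 0
      exact hG2pos
    have hfin := hG_tsum
    rw [hsplit, hG0, hG1] at hfin
    linarith [hfin, htailpos]
  -- convert to the quadratic inequality in δ
  have hB_SS : B = S * S := by rw [hBdef]; exact hSS.symm
  have hQ : 0 < x^2 + 3*x*δ - 2*((n:ℝ)+1)*x + 2*δ^2 + (1-3*((n:ℝ)+1))*δ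
      + ((n:ℝ)+1)^2 - ((n:ℝ)+1) := by
    have hms : δ^2 * ((1-3*((n:ℝ)+1)) * S + 3 * (x * S)
        + ((((n:ℝ)+1)^2-((n:ℝ)+1)) * (S*S) - 2*((n:ℝ)+1) * (x*(S*S)) + x^2 * (S*S)) + 2)
        = x^2 + 3*x*δ - 2*((n:ℝ)+1)*x + 2*δ^2 + (1-3*((n:ℝ)+1))*δ
          + ((n:ℝ)+1)^2 - ((n:ℝ)+1) := by
      linear_combination ((1-3*((n:ℝ)+1))*δ + 3*x*δ
        + ((((n:ℝ)+1)^2-((n:ℝ)+1)) - 2*((n:ℝ)+1)*x + x^2) * (δ*S+1)) * hδS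
    rw [← hms]
    rw [hB_SS] at hP
    have hδ2 : (0:ℝ) < δ^2 := by positivity
    nlinarith [hP, hδ2]
  -- the quadratic inequality (★)
  have hstar : ((n:ℝ)+1-δ) < (x - ((n:ℝ)+1) + δ) * (x - ((n:ℝ)+1) + 2*δ) := by
    nlinarith [hQ]
  -- finish with the square root
  have ha : 0 < (n:ℝ)+1-δ := by linarith
  have hy : 0 < x - ((n:ℝ)+1-δ) + δ/2 := by linarith [hweak, hδ0]
  have hsqrt : Real.sqrt (((n:ℝ)+1-δ) + δ^2/4) < x - ((n:ℝ)+1-δ) + δ/2 := by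
    rw [Real.sqrt_lt' hy]
    nlinarith [hstar]
  linarith [hsqrt]
end

section
/- Let n ≥ 0 be an integer and let ME_{n,δ} := max_{s ≥ 0} E_{n,δ}(s) for δ ∈ (0, n+1). Then d/dδ [ln ME_{n,δ}] = -ln(s_n(δ)); in particular ME_{n,δ} is a log-convex function of δ on (0, n+1). -/
open Real Finset

/-- `ME_{n,δ}`: the maximum of `E_{n,δ}` over `s ≥ 0`. -/
noncomputable def ME (n : ℕ) (δ : ℝ) : ℝ := sSup (E n δ '' Set.Ici 0)

namespace Stmt11

noncomputable def NN (n : ℕ) (s : ℝ) : ℝ := 1 - T n s * Real.exp (-s)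

lemma T_zero (n : ℕ) : T n 0 = 1 := by
  unfold T
  rw [Finset.sum_eq_single 0]
  · simp
  · intro k _ hk
    rw [zero_pow hk, zero_div]
  · simp

lemma T_hasDerivAt (n : ℕ) (s : ℝ) :
    HasDerivAt (T n) (T n s - s ^ n / (Nat.factorial n)) s := by
  induction n with
  | zero =>
      have : T 0 = fun _ : ℝ => 1 := by
        funext x; unfold T; simp
      rw [this]
      simpa using (hasDerivAt_const s (1:ℝ))
  | succ m ih =>
      have hT : T (m+1) = fun x => T m x + x ^ (m+1) / (Nat.factorial (m+1)) := by
        funext x; unfold T; rw [Finset.sum_range_succ]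
      rw [hT]
      have h2 : HasDerivAt (fun x : ℝ => x ^ (m+1) / (Nat.factorial (m+1)))
          (s ^ m / (Nat.factorial m)) s := by
        have := (hasDerivAt_pow (m+1) s).div_const (Nat.factorial (m+1) : ℝ)
        refine this.congr_deriv ?_
        rw [Nat.factorial_succ]
        push_cast
        have hm : (Nat.factorial m : ℝ) ≠ 0 := by positivity
        field_simp
      have := ih.add h2
      refine this.congr_deriv ?_
      simp only
      ring

lemma NN_hasDerivAt (n : ℕ) (s : ℝ) :
    HasDerivAt (NN n) (s ^ n / (Nat.factorial n) * Real.exp (-s)) s := by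
  have hexp : HasDerivAt (fun x : ℝ => Real.exp (-x)) (-Real.exp (-s)) s := by
    exact ((Real.hasDerivAt_exp (-s)).comp s (hasDerivAt_neg s)).congr_deriv (by ring)
  have h := ((T_hasDerivAt n s).mul hexp).const_sub 1
  refine h.congr_deriv ?_
  ring

lemma NN_zero (n : ℕ) : NN n 0 = 0 := by
  unfold NN; rw [T_zero]; simp

lemma NN_pos (n : ℕ) {s : ℝ} (hs : 0 < s) : 0 < NN n s := by
  have hmono : StrictMonoOn (NN n) (Set.Ici 0) := by
    apply strictMonoOn_of_deriv_pos (convex_Ici 0)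
    · exact fun x _ => (NN_hasDerivAt n x).continuousAt.continuousWithinAt
    · intro x hx
      rw [interior_Ici] at hx
      rw [(NN_hasDerivAt n x).deriv]
      have : (0:ℝ) < x := hx
      positivity
  have := hmono (Set.self_mem_Ici) (Set.mem_Ici.2 hs.le) hs
  rwa [NN_zero] at this

/-- Auxiliary function whose negativity gives strict monotonicity of `ρ`. -/
noncomputable def hh (n : ℕ) (s : ℝ) : ℝ :=
  ((n : ℝ) + 1 - s) * NN n s - s ^ (n + 1) / (Nat.factorial n) * Real.exp (-s)

lemma hh_hasDerivAt (n : ℕ) (s : ℝ) : HasDerivAt (hh n) (-(NN n s)) s := by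
  have hexp : HasDerivAt (fun x : ℝ => Real.exp (-x)) (-Real.exp (-s)) s := by
    exact ((Real.hasDerivAt_exp (-s)).comp s (hasDerivAt_neg s)).congr_deriv (by ring)
  have h1 : HasDerivAt (fun x : ℝ => ((n : ℝ) + 1 - x))
      (-1) s := by
    simpa using ((hasDerivAt_id s).const_sub ((n:ℝ)+1))
  have h2 : HasDerivAt (fun x : ℝ => x ^ (n+1) / (Nat.factorial n))
      (((n:ℝ)+1) * s ^ n / (Nat.factorial n)) s := by
    have := (hasDerivAt_pow (n+1) s).div_const (Nat.factorial n : ℝ)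
    refine this.congr_deriv ?_
    push_cast
    ring
  have h := (h1.mul (NN_hasDerivAt n s)).sub (h2.mul hexp)
  refine h.congr_deriv ?_
  unfold NN
  ring

lemma hh_zero (n : ℕ) : hh n 0 = 0 := by
  unfold hh; rw [NN_zero]; simp

lemma hh_neg (n : ℕ) {s : ℝ} (hs : 0 < s) : hh n s < 0 := by
  have hanti : StrictAntiOn (hh n) (Set.Ici 0) := by
    apply strictAntiOn_of_deriv_neg (convex_Ici 0)
    · exact fun x _ => (hh_hasDerivAt n x).continuousAt.continuousWithinAt
    · intro x hx
      rw [interior_Ici] at hx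
      rw [(hh_hasDerivAt n x).deriv]
      simpa using NN_pos n hx
  have := hanti (Set.self_mem_Ici) (Set.mem_Ici.2 hs.le) hs
  rwa [hh_zero] at this

/-- `ρ n s = s N'(s) / N(s)`. -/
noncomputable def ρ (n : ℕ) (s : ℝ) : ℝ :=
  s ^ (n + 1) * Real.exp (-s) / (Nat.factorial n * NN n s)

lemma ρ_hasDerivAt (n : ℕ) {s : ℝ} (hs : 0 < s) :
    HasDerivAt (ρ n)
      ((Real.exp (-s) * s ^ n * hh n s) / (Nat.factorial n * (NN n s) ^ 2)) s := by
  have hN := NN_pos n hs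
  have hfac : (Nat.factorial n : ℝ) ≠ 0 := by positivity
  have hden : (Nat.factorial n : ℝ) * NN n s ≠ 0 :=
    (mul_pos (by positivity) hN).ne'
  have hexp : HasDerivAt (fun x : ℝ => Real.exp (-x)) (-Real.exp (-s)) s := by
    exact ((Real.hasDerivAt_exp (-s)).comp s (hasDerivAt_neg s)).congr_deriv (by ring)
  have hnum : HasDerivAt (fun x : ℝ => x ^ (n+1) * Real.exp (-x))
      (((n:ℝ)+1) * s ^ n * Real.exp (-s) + s ^ (n+1) * (-Real.exp (-s))) s := by
    have := (hasDerivAt_pow (n+1) s).mul hexp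
    refine this.congr_deriv ?_
    push_cast; ring
  have hd : HasDerivAt (fun x : ℝ => (Nat.factorial n : ℝ) * NN n x)
      ((Nat.factorial n : ℝ) * (s ^ n / (Nat.factorial n) * Real.exp (-s))) s :=
    (NN_hasDerivAt n s).const_mul _
  have h := hnum.div hd hden
  refine h.congr_deriv ?_
  unfold hh
  field_simp
  ring

lemma ρ_strictAnti (n : ℕ) : StrictAntiOn (ρ n) (Set.Ioi 0) := by
  apply strictAntiOn_of_deriv_neg (convex_Ioi 0)
  · intro x hx
    exact (ρ_hasDerivAt n hx).continuousAt.continuousWithinAt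
  · intro x hx
    rw [interior_Ioi] at hx
    rw [(ρ_hasDerivAt n hx).deriv]
    have hx' : (0:ℝ) < x := hx
    have h1 := hh_neg n hx
    have h2 := NN_pos n hx
    have h3 : (0:ℝ) < Real.exp (-x) * x ^ n := by positivity
    have h4 : (0:ℝ) < (Nat.factorial n : ℝ) * (NN n x) ^ 2 :=
      mul_pos (by positivity) (pow_pos h2 2)
    exact div_neg_of_neg_of_pos (mul_neg_of_pos_of_neg h3 h1) h4

/-- The log of `E` for positive `s`. -/
noncomputable def φφ (n : ℕ) (δ s : ℝ) : ℝ := Real.log (NN n s) - δ * Real.log s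

lemma φφ_hasDerivAt (n : ℕ) (δ : ℝ) {s : ℝ} (hs : 0 < s) :
    HasDerivAt (φφ n δ) ((ρ n s - δ) / s) s := by
  have hN := NN_pos n hs
  have h1 : HasDerivAt (fun x => Real.log (NN n x))
      ((s ^ n / (Nat.factorial n) * Real.exp (-s)) / NN n s) s :=
    (NN_hasDerivAt n s).log hN.ne'
  have h2 : HasDerivAt (fun x : ℝ => δ * Real.log x) (δ * s⁻¹) s :=
    (Real.hasDerivAt_log hs.ne').const_mul δ
  have h := h1.sub h2
  refine h.congr_deriv ?_
  unfold ρ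
  have hfac : (Nat.factorial n : ℝ) ≠ 0 := by positivity
  field_simp
  ring

lemma E_pos_eq (n : ℕ) (δ : ℝ) {s : ℝ} (hs : 0 < s) :
    E n δ s = Real.exp (φφ n δ s) := by
  have hN := NN_pos n hs
  unfold E φφ
  rw [Real.exp_sub, Real.exp_log hN, Real.rpow_def_of_pos hs, mul_comm (Real.log s) δ]
  rfl

lemma E_zero (n : ℕ) {δ : ℝ} (hδ : δ ≠ 0) : E n δ 0 = 0 := by
  unfold E
  rw [Real.zero_rpow hδ, div_zero]

section

variable {n : ℕ} {δ : ℝ} {sn : ℝ → ℝ}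

lemma ρ_sn (hsn : ∀ δ ∈ Set.Ioo (0 : ℝ) ((n : ℝ) + 1), 0 < sn δ ∧
      Real.exp (sn δ) = T n (sn δ) + (sn δ) ^ (n + 1) / (δ * Nat.factorial n))
    (hδ : δ ∈ Set.Ioo (0 : ℝ) ((n : ℝ) + 1)) : ρ n (sn δ) = δ := by
  obtain ⟨hpos, heq⟩ := hsn δ hδ
  have hδ0 : (0:ℝ) < δ := hδ.1
  have hfac : (0:ℝ) < (Nat.factorial n : ℝ) := by positivity
  have hNN : NN n (sn δ) = (sn δ) ^ (n + 1) / (δ * Nat.factorial n) * Real.exp (-(sn δ)) := by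
    unfold NN
    have : T n (sn δ) = Real.exp (sn δ) - (sn δ) ^ (n + 1) / (δ * Nat.factorial n) := by
      linarith
    rw [this]
    rw [Real.exp_neg]
    have hE : Real.exp (sn δ) ≠ 0 := (Real.exp_pos _).ne'
    field_simp
    ring
  unfold ρ
  rw [hNN]
  have h1 : (sn δ) ^ (n+1) ≠ 0 := by positivity
  have h2 : Real.exp (-(sn δ)) ≠ 0 := (Real.exp_pos _).ne'
  field_simp

end

section

variable {n : ℕ} {δ δ' : ℝ} {sn : ℝ → ℝ}
variable (hsn : ∀ δ ∈ Set.Ioo (0 : ℝ) ((n : ℝ) + 1), 0 < sn δ ∧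
      Real.exp (sn δ) = T n (sn δ) + (sn δ) ^ (n + 1) / (δ * Nat.factorial n))
include hsn

lemma φφ_le (hδ : δ ∈ Set.Ioo (0 : ℝ) ((n : ℝ) + 1)) {s : ℝ} (hs : 0 < s) :
    φφ n δ s ≤ φφ n δ (sn δ) := by
  have hs0 : 0 < sn δ := (hsn δ hδ).1
  have hρ0 : ρ n (sn δ) = δ := ρ_sn hsn hδ
  rcases le_total s (sn δ) with h | h
  · have hmono : StrictMonoOn (φφ n δ) (Set.Ioc 0 (sn δ)) := by
      apply strictMonoOn_of_deriv_pos (convex_Ioc 0 (sn δ))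
      · intro x hx
        exact (φφ_hasDerivAt n δ hx.1).continuousAt.continuousWithinAt
      · intro x hx
        rw [interior_Ioc] at hx
        rw [(φφ_hasDerivAt n δ hx.1).deriv]
        have : δ < ρ n x := by
          rw [← hρ0]
          exact ρ_strictAnti n hx.1 hs0 hx.2
        exact div_pos (by linarith) hx.1
    exact hmono.monotoneOn ⟨hs, h⟩ ⟨hs0, le_refl _⟩ h
  · have hanti : StrictAntiOn (φφ n δ) (Set.Ici (sn δ)) := by
      apply strictAntiOn_of_deriv_neg (convex_Ici (sn δ))
      · intro x hx
        exact (φφ_hasDerivAt n δ (lt_of_lt_of_le hs0 hx)).continuousAt.continuousWithinAt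
      · intro x hx
        rw [interior_Ici] at hx
        have hx0 : 0 < x := lt_trans hs0 hx
        rw [(φφ_hasDerivAt n δ hx0).deriv]
        have : ρ n x < δ := by
          rw [← hρ0]
          exact ρ_strictAnti n hs0 hx0 hx
        exact div_neg_of_neg_of_pos (by linarith) hx0
    exact hanti.antitoneOn (Set.self_mem_Ici) h h

lemma E_isGreatest (hδ : δ ∈ Set.Ioo (0 : ℝ) ((n : ℝ) + 1)) :
    IsGreatest (E n δ '' Set.Ici 0) (E n δ (sn δ)) := by
  have hs0 : 0 < sn δ := (hsn δ hδ).1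
  constructor
  · exact ⟨sn δ, hs0.le, rfl⟩
  · rintro y ⟨s, hs, rfl⟩
    rcases eq_or_lt_of_le (Set.mem_Ici.1 hs) with h | h
    · rw [← h, E_zero n (ne_of_gt hδ.1), E_pos_eq n δ hs0]
      exact (Real.exp_pos _).le
    · rw [E_pos_eq n δ h, E_pos_eq n δ hs0]
      exact Real.exp_le_exp.2 (φφ_le hsn hδ h)

lemma ME_eq (hδ : δ ∈ Set.Ioo (0 : ℝ) ((n : ℝ) + 1)) :
    ME n δ = E n δ (sn δ) :=
  (E_isGreatest hsn hδ).csSup_eq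

lemma log_ME_eq (hδ : δ ∈ Set.Ioo (0 : ℝ) ((n : ℝ) + 1)) :
    Real.log (ME n δ) = φφ n δ (sn δ) := by
  rw [ME_eq hsn hδ, E_pos_eq n δ (hsn δ hδ).1, Real.log_exp]

lemma log_ME_ge (hδ : δ ∈ Set.Ioo (0 : ℝ) ((n : ℝ) + 1))
    (hδ' : δ' ∈ Set.Ioo (0 : ℝ) ((n : ℝ) + 1)) :
    φφ n δ' (sn δ) ≤ Real.log (ME n δ') := by
  have hs0 : 0 < sn δ := (hsn δ hδ).1
  have h := (E_isGreatest hsn hδ').2 ⟨sn δ, hs0.le, rfl⟩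
  rw [E_pos_eq n δ' hs0, E_pos_eq n δ' (hsn δ' hδ').1] at h
  rw [log_ME_eq hsn hδ']
  exact Real.exp_le_exp.1 h

lemma sn_strictAnti (hδ : δ ∈ Set.Ioo (0 : ℝ) ((n : ℝ) + 1))
    (hδ' : δ' ∈ Set.Ioo (0 : ℝ) ((n : ℝ) + 1)) (h : δ < δ') : sn δ' < sn δ := by
  have h1 : ρ n (sn δ) = δ := ρ_sn hsn hδ
  have h2 : ρ n (sn δ') = δ' := ρ_sn hsn hδ'
  by_contra hc
  push_neg at hc
  rcases eq_or_lt_of_le hc with he | hl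
  · rw [← he] at h2; rw [h1] at h2; linarith
  · have := ρ_strictAnti n (Set.mem_Ioi.2 (hsn δ hδ).1) (Set.mem_Ioi.2 (hsn δ' hδ').1) hl
    rw [h1, h2] at this; linarith

lemma sn_tendsto (hδ : δ ∈ Set.Ioo (0 : ℝ) ((n : ℝ) + 1)) :
    Filter.Tendsto sn (nhds δ) (nhds (sn δ)) := by
  have hs0 : 0 < sn δ := (hsn δ hδ).1
  rw [Metric.tendsto_nhds]
  intro ε hε
  set ε' : ℝ := min ε (sn δ / 2) with hε'def
  have hε' : 0 < ε' := lt_min hε (by linarith)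
  have hlow : 0 < sn δ - ε' := by
    have : ε' ≤ sn δ / 2 := min_le_right _ _
    linarith
  have hρδ : ρ n (sn δ) = δ := ρ_sn hsn hδ
  have ha : ρ n (sn δ + ε') < δ := by
    have h := ρ_strictAnti n (Set.mem_Ioi.2 hs0) (Set.mem_Ioi.2 (by linarith : (0:ℝ) < sn δ + ε')) (by linarith)
    linarith
  have hb : δ < ρ n (sn δ - ε') := by
    have h := ρ_strictAnti n (Set.mem_Ioi.2 hlow) (Set.mem_Ioi.2 hs0) (by linarith)
    linarith
  have hopen : Set.Ioo (0:ℝ) ((n:ℝ)+1) ∩ Set.Ioo (ρ n (sn δ + ε')) (ρ n (sn δ - ε')) ∈ nhds δ := by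
    apply Filter.inter_mem
    · exact (isOpen_Ioo).mem_nhds hδ
    · exact (isOpen_Ioo).mem_nhds ⟨ha, hb⟩
  filter_upwards [hopen] with x hx
  obtain ⟨hx1, hx2⟩ := hx
  have hρx : ρ n (sn x) = x := ρ_sn hsn hx1
  have hsx : 0 < sn x := (hsn x hx1).1
  have hup : sn x < sn δ + ε' := by
    by_contra hc
    push_neg at hc
    rcases eq_or_lt_of_le hc with he | hl
    · rw [he] at hx2; rw [hρx] at hx2; exact lt_irrefl _ hx2.1
    · have := ρ_strictAnti n (Set.mem_Ioi.2 (by linarith : (0:ℝ) < sn δ + ε'))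
        (Set.mem_Ioi.2 hsx) hl
      rw [hρx] at this
      linarith [hx2.1]
  have hdown : sn δ - ε' < sn x := by
    by_contra hc
    push_neg at hc
    rcases eq_or_lt_of_le hc with he | hl
    · rw [← he] at hx2; rw [hρx] at hx2; exact lt_irrefl _ hx2.2
    · have := ρ_strictAnti n (Set.mem_Ioi.2 hsx) (Set.mem_Ioi.2 hlow) hl
      rw [hρx] at this
      linarith [hx2.2]
  rw [Real.dist_eq, abs_lt]
  constructor
  · have : ε' ≤ ε := min_le_left _ _
    linarith
  · have : ε' ≤ ε := min_le_left _ _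
    linarith

end

section

variable {n : ℕ} {sn : ℝ → ℝ}
variable (hsn : ∀ δ ∈ Set.Ioo (0 : ℝ) ((n : ℝ) + 1), 0 < sn δ ∧
      Real.exp (sn δ) = T n (sn δ) + (sn δ) ^ (n + 1) / (δ * Nat.factorial n))
include hsn

lemma logME_hasDerivAt {δ₀ : ℝ} (hδ₀ : δ₀ ∈ Set.Ioo (0 : ℝ) ((n : ℝ) + 1)) :
    HasDerivAt (fun t => Real.log (ME n t)) (-Real.log (sn δ₀)) δ₀ := by
  have hs0 : 0 < sn δ₀ := (hsn δ₀ hδ₀).1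
  rw [hasDerivAt_iff_isLittleO]
  rw [Asymptotics.isLittleO_iff]
  intro c hc
  have hlog : Filter.Tendsto (fun δ => Real.log (sn δ)) (nhds δ₀) (nhds (Real.log (sn δ₀))) :=
    (Real.continuousAt_log hs0.ne').tendsto.comp (sn_tendsto hsn hδ₀)
  have h1 : ∀ᶠ δ in nhds δ₀, |Real.log (sn δ) - Real.log (sn δ₀)| ≤ c := by
    have := Metric.tendsto_nhds.1 hlog c hc
    filter_upwards [this] with δ hδ
    rw [Real.dist_eq] at hδ
    exact hδ.le
  have h2 : Set.Ioo (0:ℝ) ((n:ℝ)+1) ∈ nhds δ₀ := isOpen_Ioo.mem_nhds hδ₀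
  filter_upwards [h1, h2] with δ hδ1 hδ2
  have hF : Real.log (ME n δ) = φφ n δ (sn δ) := log_ME_eq hsn hδ2
  have hF0 : Real.log (ME n δ₀) = φφ n δ₀ (sn δ₀) := log_ME_eq hsn hδ₀
  have hge : φφ n δ (sn δ₀) ≤ Real.log (ME n δ) := log_ME_ge hsn hδ₀ hδ2
  have hge' : φφ n δ₀ (sn δ) ≤ Real.log (ME n δ₀) := log_ME_ge hsn hδ2 hδ₀
  simp only [smul_eq_mul]
  rw [Real.norm_eq_abs, Real.norm_eq_abs, abs_le]
  unfold φφ at hF hF0 hge hge'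
  constructor
  · -- lower bound: err ≥ 0 ≥ -c|δ-δ₀|
    have herr : 0 ≤ Real.log (ME n δ) - Real.log (ME n δ₀) - (δ - δ₀) * -Real.log (sn δ₀) := by
      rw [hF0]
      nlinarith [hge]
    have : (0:ℝ) ≤ c * |δ - δ₀| := mul_nonneg hc.le (abs_nonneg _)
    linarith
  · -- upper bound
    have herr : Real.log (ME n δ) - Real.log (ME n δ₀) - (δ - δ₀) * -Real.log (sn δ₀)
        ≤ (δ - δ₀) * (Real.log (sn δ₀) - Real.log (sn δ)) := by
      rw [hF]
      nlinarith [hge']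
    have h3 : (δ - δ₀) * (Real.log (sn δ₀) - Real.log (sn δ)) ≤ c * |δ - δ₀| := by
      calc (δ - δ₀) * (Real.log (sn δ₀) - Real.log (sn δ))
          ≤ |(δ - δ₀) * (Real.log (sn δ₀) - Real.log (sn δ))| := le_abs_self _
        _ = |δ - δ₀| * |Real.log (sn δ₀) - Real.log (sn δ)| := abs_mul _ _
        _ ≤ |δ - δ₀| * c := by
            apply mul_le_mul_of_nonneg_left _ (abs_nonneg _)
            rw [abs_sub_comm]
            exact hδ1
        _ = c * |δ - δ₀| := mul_comm _ _
    linarith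

lemma logME_convexOn :
    ConvexOn ℝ (Set.Ioo (0 : ℝ) ((n : ℝ) + 1)) (fun δ => Real.log (ME n δ)) := by
  have hint : interior (Set.Ioo (0:ℝ) ((n:ℝ)+1)) = Set.Ioo (0:ℝ) ((n:ℝ)+1) :=
    interior_eq_iff_isOpen.2 isOpen_Ioo
  apply MonotoneOn.convexOn_of_deriv (convex_Ioo _ _)
  · intro x hx
    exact (logME_hasDerivAt hsn hx).continuousAt.continuousWithinAt
  · rw [hint]
    intro x hx
    exact (logME_hasDerivAt hsn hx).differentiableAt.differentiableWithinAt
  · rw [hint]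
    intro x hx y hy hxy
    rw [(logME_hasDerivAt hsn hx).deriv, (logME_hasDerivAt hsn hy).deriv]
    rcases eq_or_lt_of_le hxy with he | hl
    · rw [he]
    · have hs := sn_strictAnti hsn hx hy hl
      have hy0 : 0 < sn y := (hsn y hy).1
      have := Real.log_le_log hy0 hs.le
      linarith

end

end Stmt11

theorem stmt11 (n : ℕ) (sn : ℝ → ℝ)
    (hsn : ∀ δ ∈ Set.Ioo (0 : ℝ) ((n : ℝ) + 1), 0 < sn δ ∧
      Real.exp (sn δ) = T n (sn δ) + (sn δ) ^ (n + 1) / (δ * Nat.factorial n)) :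
    (∀ δ ∈ Set.Ioo (0 : ℝ) ((n : ℝ) + 1),
      HasDerivAt (fun t => Real.log (ME n t)) (-Real.log (sn δ)) δ) ∧
    ConvexOn ℝ (Set.Ioo (0 : ℝ) ((n : ℝ) + 1)) (fun δ => Real.log (ME n δ)) :=
  ⟨fun _ hδ => Stmt11.logME_hasDerivAt hsn hδ, Stmt11.logME_convexOn hsn⟩
end

section
/- Let n ≥ 0 be an integer, δ_{n,E} = (n!(e - Σ_{k=0}^n 1/k!))^{-1}, and Ê_n = (1/e)(e - Σ_{k=0}^n 1/k!). Then (n+1)²/(n+2) < δ_{n,E} < (n+2)(n+1)/(n+3) and (n+3)/((n+2)(n+1)!e) < Ê_n < (n+2)/((n+1)(n+1)!e). -/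
open Real Finset

lemma aux_tail_nonneg (m : ℕ) :
    0 ≤ Real.exp 1 - ∑ k ∈ Finset.range m, 1 / (Nat.factorial k : ℝ) := by
  have h := Real.sum_le_exp_of_nonneg (x := 1) zero_le_one m
  simp only [one_pow] at h
  linarith

lemma aux_tail_pos (m : ℕ) :
    0 < Real.exp 1 - ∑ k ∈ Finset.range m, 1 / (Nat.factorial k : ℝ) := by
  have h := aux_tail_nonneg (m + 1)
  rw [Finset.sum_range_succ] at h
  have hp : (0:ℝ) < 1 / (Nat.factorial m : ℝ) := by positivity
  linarith

lemma aux_upper (n : ℕ) :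
    Real.exp 1 - ∑ k ∈ Finset.range (n + 1), 1 / (Nat.factorial k : ℝ)
      < ((n:ℝ) + 2) / (((n:ℝ) + 1) * (Nat.factorial (n + 1) : ℝ)) := by
  have hb := Real.exp_bound (x := 1) (by norm_num) (n := n + 2) (by omega)
  simp only [one_pow, abs_one, one_mul, one_div] at hb
  rw [abs_le] at hb
  have hs : (∑ m ∈ Finset.range (n + 2), (Nat.factorial m : ℝ)⁻¹)
      = (∑ k ∈ Finset.range (n + 1), 1 / (Nat.factorial k : ℝ)) + (Nat.factorial (n+1) : ℝ)⁻¹ := by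
    rw [Finset.sum_range_succ]; simp
  rw [hs] at hb
  have hF : (0:ℝ) < (Nat.factorial (n + 1) : ℝ) := by positivity
  have hfact : ((n + 2).factorial : ℝ) = ((n:ℝ) + 2) * (Nat.factorial (n + 1) : ℝ) := by
    rw [Nat.factorial_succ]; push_cast; ring
  have h2 := hb.2
  rw [hfact] at h2
  have key : ((n:ℝ)+2+1) / (((n:ℝ) + 2) * (Nat.factorial (n + 1) : ℝ) * ((n:ℝ)+2))
      + (Nat.factorial (n+1) : ℝ)⁻¹ < ((n:ℝ) + 2) / (((n:ℝ) + 1) * (Nat.factorial (n + 1) : ℝ)) := by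
    have hFne : (Nat.factorial (n + 1) : ℝ) ≠ 0 := ne_of_gt hF
    rw [inv_eq_one_div, div_add_div _ _ (by positivity) hFne,
      div_lt_div_iff₀ (by positivity) (by positivity)]
    nlinarith [mul_pos hF hF, hF, (Nat.cast_nonneg n : (0:ℝ) ≤ n)]
  have h3 : ((n:ℝ) + 2 + 1) = ((n+2:ℕ).succ : ℝ) := by push_cast; ring
  push_cast at h2
  linarith

lemma aux_lower (n : ℕ) :
    ((n:ℝ) + 3) / (((n:ℝ) + 2) * (Nat.factorial (n + 1) : ℝ))
      < Real.exp 1 - ∑ k ∈ Finset.range (n + 1), 1 / (Nat.factorial k : ℝ) := by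
  have h := aux_tail_pos (n + 3)
  rw [Finset.sum_range_succ, Finset.sum_range_succ] at h
  have hF : (0:ℝ) < (Nat.factorial (n + 1) : ℝ) := by positivity
  have hf2 : ((n + 2).factorial : ℝ) = ((n:ℝ) + 2) * (Nat.factorial (n + 1) : ℝ) := by
    rw [Nat.factorial_succ]; push_cast; ring
  have key : ((n:ℝ) + 3) / (((n:ℝ) + 2) * (Nat.factorial (n + 1) : ℝ))
      = 1 / (Nat.factorial (n+1) : ℝ) + 1 / (((n:ℝ) + 2) * (Nat.factorial (n + 1) : ℝ)) := by
    field_simp; ring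
  rw [key, ← hf2]
  linarith

theorem stmt13 (n : ℕ) (δE En : ℝ)
    (hδE : δE = ((Nat.factorial n : ℝ) *
      (Real.exp 1 - ∑ k ∈ Finset.range (n + 1), 1 / (Nat.factorial k : ℝ)))⁻¹)
    (hEn : En = (1 / Real.exp 1) *
      (Real.exp 1 - ∑ k ∈ Finset.range (n + 1), 1 / (Nat.factorial k : ℝ))) :
    ((n : ℝ) + 1) ^ 2 / ((n : ℝ) + 2) < δE ∧
    δE < ((n : ℝ) + 2) * ((n : ℝ) + 1) / ((n : ℝ) + 3) ∧
    ((n : ℝ) + 3) / (((n : ℝ) + 2) * (Nat.factorial (n + 1)) * Real.exp 1) < En ∧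
    En < ((n : ℝ) + 2) / (((n : ℝ) + 1) * (Nat.factorial (n + 1)) * Real.exp 1) := by
  set R := Real.exp 1 - ∑ k ∈ Finset.range (n + 1), 1 / (Nat.factorial k : ℝ) with hR
  have hRpos : 0 < R := aux_tail_pos (n + 1)
  have hup := aux_upper n
  have hlo := aux_lower n
  have hF : (0:ℝ) < (Nat.factorial n : ℝ) := by positivity
  have hF1 : ((n+1).factorial : ℝ) = ((n:ℝ) + 1) * (Nat.factorial n : ℝ) := by
    rw [Nat.factorial_succ]; push_cast; ring
  have he : (0:ℝ) < Real.exp 1 := Real.exp_pos 1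
  have hprod : (0:ℝ) < (Nat.factorial n : ℝ) * R := by positivity
  refine ⟨?_, ?_, ?_, ?_⟩
  · -- δE lower
    rw [hδE]
    have hub : (Nat.factorial n : ℝ) * R < ((n:ℝ) + 2) / (((n:ℝ) + 1)^2) := by
      have := mul_lt_mul_of_pos_left hup hF
      rw [hF1] at this
      calc (Nat.factorial n : ℝ) * R < (Nat.factorial n : ℝ) * (((n:ℝ) + 2) / (((n:ℝ) + 1) * (((n:ℝ) + 1) * (Nat.factorial n : ℝ)))) := this
        _ = ((n:ℝ) + 2) / (((n:ℝ) + 1)^2) := by field_simp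
    have := inv_strictAnti₀ hprod hub
    rwa [show (((n:ℝ) + 2) / (((n:ℝ) + 1)^2))⁻¹ = ((n:ℝ) + 1)^2 / ((n:ℝ) + 2) by
      rw [inv_div]] at this
  · -- δE upper
    rw [hδE]
    have hlb : ((n:ℝ) + 3) / (((n:ℝ) + 2) * ((n:ℝ) + 1)) < (Nat.factorial n : ℝ) * R := by
      have := mul_lt_mul_of_pos_left hlo hF
      rw [hF1] at this
      calc ((n:ℝ) + 3) / (((n:ℝ) + 2) * ((n:ℝ) + 1))
          = (Nat.factorial n : ℝ) * (((n:ℝ) + 3) / (((n:ℝ) + 2) * (((n:ℝ) + 1) * (Nat.factorial n : ℝ)))) := by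
            field_simp
        _ < (Nat.factorial n : ℝ) * R := this
    have hpos2 : (0:ℝ) < ((n:ℝ) + 3) / (((n:ℝ) + 2) * ((n:ℝ) + 1)) := by positivity
    have := inv_strictAnti₀ hpos2 hlb
    rwa [show (((n:ℝ) + 3) / (((n:ℝ) + 2) * ((n:ℝ) + 1)))⁻¹ = ((n:ℝ) + 2) * ((n:ℝ) + 1) / ((n:ℝ) + 3) by
      rw [inv_div]] at this
  · -- En lower
    rw [hEn]
    have h1 : ((n:ℝ) + 3) / (((n:ℝ) + 2) * (Nat.factorial (n+1) : ℝ) * Real.exp 1)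
        = (1 / Real.exp 1) * (((n:ℝ) + 3) / (((n:ℝ) + 2) * (Nat.factorial (n+1) : ℝ))) := by
      field_simp
    rw [h1]
    exact mul_lt_mul_of_pos_left hlo (by positivity)
  · -- En upper
    rw [hEn]
    have h1 : ((n:ℝ) + 2) / (((n:ℝ) + 1) * (Nat.factorial (n+1) : ℝ) * Real.exp 1)
        = (1 / Real.exp 1) * (((n:ℝ) + 2) / (((n:ℝ) + 1) * (Nat.factorial (n+1) : ℝ))) := by
      field_simp
    rw [h1]
    exact mul_lt_mul_of_pos_left hup (by positivity)
end
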